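/- Let 1 ≤ p < ∞. For every ε > 0 there exists N such that for all n ≥ N and every real algebraic polynomial P of degree at most n, (∫_{−1}^1 |√(1−x²)·P'(x)|^p · (π√(1−x²))^{−1} dx)^{1/p} ≤ (1+ε) · n · (∫_{−1}^1 |P(x)|^p · (π√(1−x²))^{−1} dx)^{1/p} (the L^p Bernstein-type inequality of Nagy and Toókos on [−1,1], where the equilibrium density of [−1,1] is ω(x) = 1/(π√(1−x²))). -/

import Mathlib

/-!
The substitution `x = cos θ` turns both weighted integrals into `π⁻¹ ∫₀^π … dθ` and
`√(1 - x²) P'(x)` into `-(d/dθ) P(cos θ)`, so the inequality is Bernstein's `L^p` inequality for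
the trigonometric polynomial `P(cos θ)` of degree `≤ n`. That one follows from M. Riesz's
interpolation formula, which writes the derivative of such a polynomial as a combination of `2n`
of its translates with coefficients of alternating sign and total mass `n`. Hölder's inequality and
the translation invariance of integrals over a period then bound the `L^p` norm of the derivative
by `n` times that of the polynomial.
-/

open Real Set Polynomial MeasureTheory Finset

-- With `θ_k = rieszNode n k`, M. Riesz's interpolation formula reads `rieszSum n T t = 4n T'(t)`
-- for every trigonometric polynomial `T` of degree `≤ n`.
noncomputable def rieszNode (n k : ℕ) : ℝ := (2 * k + 1) * π / (2 * n)

noncomputable def rieszWeight (n k : ℕ) : ℝ := (sin (rieszNode n k / 2) ^ 2)⁻¹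

noncomputable def rieszSum (n : ℕ) (f : ℝ → ℝ) (t : ℝ) : ℝ :=
  ∑ k ∈ range (2 * n), (-1) ^ k * rieszWeight n k * f (t + rieszNode n k)

section RieszInterpolation

variable {n k : ℕ}

lemma rieszWeight_nonneg (n k : ℕ) : 0 ≤ rieszWeight n k := by
  unfold rieszWeight; positivity

lemma rieszNode_reflect (hk : k < 2 * n) :
    rieszNode n (2 * n - 1 - k) = 2 * π - rieszNode n k := by
  have hn : (n : ℝ) ≠ 0 := by norm_cast; omega
  unfold rieszNode
  rw [Nat.cast_sub (by omega), Nat.cast_sub (by omega)]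
  field_simp
  push_cast
  ring

lemma sin_half_rieszNode_pos (hk : k < 2 * n) : 0 < sin (rieszNode n k / 2) := by
  have hn : (0 : ℝ) < n := by norm_cast; omega
  have hk' : (2 * k + 1 : ℝ) < 4 * n := by norm_cast; omega
  apply sin_pos_of_pos_of_lt_pi
  · unfold rieszNode; positivity
  · unfold rieszNode
    rw [div_div, div_lt_iff₀ (by positivity)]
    nlinarith [pi_pos]

lemma rieszWeight_pos (hk : k < 2 * n) : 0 < rieszWeight n k := by
  have := sin_half_rieszNode_pos hk
  unfold rieszWeight; positivity

lemma sum_neg_one_pow_mul_rieszWeight_mul_cos (m : ℕ) :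
    ∑ k ∈ range (2 * n), (-1) ^ k * rieszWeight n k * cos (m * rieszNode n k) = 0 := by
  set f : ℕ → ℝ := fun k => (-1) ^ k * rieszWeight n k * cos (m * rieszNode n k)
  have hreflect : ∀ k ∈ range (2 * n), f (2 * n - 1 - k) = -f k := by
    intro k hk
    have hk := mem_range.mp hk
    have hsign : (-1 : ℝ) ^ (2 * n - 1 - k) = -(-1) ^ k := by
      rw [pow_sub₀ _ (by norm_num) (by omega), ← inv_pow, inv_neg_one,
        Odd.neg_one_pow ⟨n - 1, by omega⟩, neg_one_mul]
    have hcos : cos (m * (2 * π - rieszNode n k)) = cos (m * rieszNode n k) := by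
      rw [mul_sub, cos_nat_mul_two_pi_sub]
    have hsin : sin ((2 * π - rieszNode n k) / 2) = sin (rieszNode n k / 2) := by
      rw [sub_div, mul_div_cancel_left₀ π two_ne_zero, sin_pi_sub]
    simp only [f, rieszWeight, rieszNode_reflect hk, hsign, hcos, hsin]
    ring
  have := sum_range_reflect f (2 * n)
  rw [sum_congr rfl hreflect, sum_neg_distrib] at this
  linarith

lemma sum_neg_one_pow_mul_sin_rieszNode {j : ℕ} (hj : j < n) :
    ∑ k ∈ range (2 * n), (-1) ^ k * sin (j * rieszNode n k) = 0 := by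
  -- `∑ (-1)^k exp (i j θ_k)` is a geometric sum whose ratio `q` is a `2n`-th root of unity other
  -- than `1`.
  have hn : (n : ℂ) ≠ 0 := by norm_cast; omega
  have hn' : (0 : ℝ) < n := by norm_cast; omega
  set a : ℝ := j * π / (2 * n)
  set q : ℂ := -Complex.exp (↑(2 * a) * Complex.I)
  have hq : q ≠ 1 := by
    intro h
    have hcos : cos (2 * a) = -1 := by
      have := congrArg Complex.re h
      rw [Complex.neg_re, Complex.exp_ofReal_mul_I_re, Complex.one_re] at this
      linarith
    have h2a : 2 * a < π := by
      have : (j : ℝ) < n := by norm_cast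
      simp only [a]
      rw [mul_div_assoc', mul_div_mul_left _ _ two_ne_zero, div_lt_iff₀ (by positivity)]
      nlinarith [pi_pos]
    have := cos_lt_cos_of_nonneg_of_le_pi (by positivity) le_rfl h2a
    rw [cos_pi, hcos] at this
    exact lt_irrefl _ this
  have hq_pow : q ^ (2 * n) = 1 := by
    have : (↑(2 * n) : ℂ) * (↑(2 * a) * Complex.I) = j * (2 * π * Complex.I) := by
      simp only [a]; push_cast; field_simp
    rw [neg_pow, Even.neg_one_pow ⟨n, by ring⟩, one_mul, ← Complex.exp_nat_mul, this,
      Complex.exp_nat_mul_two_pi_mul_I]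
  have hterm : ∀ k, Complex.ofReal ((-1) ^ k) * Complex.exp (↑(j * rieszNode n k) * Complex.I) =
      Complex.exp (a * Complex.I) * q ^ k := by
    intro k
    have : (↑(j * rieszNode n k) : ℂ) * Complex.I =
        a * Complex.I + k * (↑(2 * a) * Complex.I) := by
      simp only [a, rieszNode]; push_cast; field_simp; ring
    rw [this, Complex.exp_add, Complex.exp_nat_mul,
      show q ^ k = (-1) ^ k * Complex.exp (↑(2 * a) * Complex.I) ^ k from neg_pow _ k]
    push_cast
    ring
  have hsum : ∑ k ∈ range (2 * n), Complex.ofReal ((-1) ^ k) *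
      Complex.exp (↑(j * rieszNode n k) * Complex.I) = 0 := by
    rw [sum_congr rfl fun k _ => hterm k, ← mul_sum, geom_sum_eq hq, hq_pow, sub_self,
      zero_div, mul_zero]
  have := congrArg Complex.im hsum
  rw [Complex.im_sum] at this
  simpa only [Complex.im_ofReal_mul, Complex.exp_ofReal_mul_I_im, Complex.zero_im] using this

lemma sum_neg_one_pow_mul_cos_odd_mul_div_sin {m : ℕ} (hm : m < n) :
    ∑ k ∈ range (2 * n),
        (-1) ^ k * cos ((2 * m + 1) * (rieszNode n k / 2)) / sin (rieszNode n k / 2) =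
      ∑ k ∈ range (2 * n), (-1) ^ k * cos (rieszNode n k / 2) / sin (rieszNode n k / 2) := by
  induction m with
  | zero => simp
  | succ m ih =>
    rw [← ih (by omega), ← sub_eq_zero, ← sum_sub_distrib]
    have hterm : ∀ k ∈ range (2 * n),
        (-1) ^ k * cos ((2 * ↑(m + 1) + 1) * (rieszNode n k / 2)) / sin (rieszNode n k / 2) -
          (-1) ^ k * cos ((2 * m + 1) * (rieszNode n k / 2)) / sin (rieszNode n k / 2) =
        -2 * ((-1) ^ k * sin (↑(m + 1) * rieszNode n k)) := by
      intro k hk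
      have hsin := (sin_half_rieszNode_pos (mem_range.mp hk)).ne'
      have hcos : cos ((2 * ↑(m + 1) + 1) * (rieszNode n k / 2)) -
          cos ((2 * m + 1) * (rieszNode n k / 2)) =
          -2 * sin (↑(m + 1) * rieszNode n k) * sin (rieszNode n k / 2) := by
        rw [cos_sub_cos]; push_cast; ring_nf
      rw [← sub_div, ← mul_sub, hcos]
      field_simp
    rw [sum_congr rfl hterm, ← mul_sum, sum_neg_one_pow_mul_sin_rieszNode hm, mul_zero]

lemma sum_neg_one_pow_mul_rieszWeight_mul_sin_succ_sub (m : ℕ) :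
    ∑ k ∈ range (2 * n), (-1) ^ k * rieszWeight n k * sin (↑(m + 1) * rieszNode n k) -
        ∑ k ∈ range (2 * n), (-1) ^ k * rieszWeight n k * sin (m * rieszNode n k) =
      2 * ∑ k ∈ range (2 * n),
        (-1) ^ k * cos ((2 * m + 1) * (rieszNode n k / 2)) / sin (rieszNode n k / 2) := by
  rw [← sum_sub_distrib, mul_sum]
  refine sum_congr rfl fun k hk => ?_
  have hsin := (sin_half_rieszNode_pos (mem_range.mp hk)).ne'
  have hdiff : sin (↑(m + 1) * rieszNode n k) - sin (m * rieszNode n k) =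
      2 * sin (rieszNode n k / 2) * cos ((2 * m + 1) * (rieszNode n k / 2)) := by
    rw [sin_sub_sin]; push_cast; ring_nf
  rw [← mul_sub, hdiff, rieszWeight]
  field_simp

lemma sum_neg_one_pow_mul_rieszWeight_mul_sin_eq {m : ℕ} (hm : m ≤ n) :
    ∑ k ∈ range (2 * n), (-1) ^ k * rieszWeight n k * sin (m * rieszNode n k) =
      2 * m * ∑ k ∈ range (2 * n),
        (-1) ^ k * cos (rieszNode n k / 2) / sin (rieszNode n k / 2) := by
  induction m with
  | zero => simp
  | succ m ih =>
    have hstep := sum_neg_one_pow_mul_rieszWeight_mul_sin_succ_sub (n := n) m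
    rw [sum_neg_one_pow_mul_cos_odd_mul_div_sin (by omega), ih (by omega)] at hstep
    push_cast at hstep ⊢
    linarith

lemma sum_neg_one_pow_mul_rieszWeight_mul_sin {m : ℕ} (hm : m ≤ n) :
    ∑ k ∈ range (2 * n), (-1) ^ k * rieszWeight n k * sin (m * rieszNode n k) =
      m / n * ∑ k ∈ range (2 * n), rieszWeight n k := by
  -- The case `m = n`, where `sin (n θ_k) = (-1)^k`, fixes the constant without evaluating
  -- `∑ csc² (θ_k / 2) = 4n²`.
  rcases Nat.eq_zero_or_pos n with rfl | hn
  · simp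
  have hn' : (n : ℝ) ≠ 0 := by positivity
  have htop : ∑ k ∈ range (2 * n), (-1) ^ k * rieszWeight n k * sin (n * rieszNode n k) =
      ∑ k ∈ range (2 * n), rieszWeight n k := by
    refine sum_congr rfl fun k _ => ?_
    have : (n : ℝ) * rieszNode n k = π / 2 + k * π := by
      unfold rieszNode; field_simp; ring
    rw [this, sin_add_nat_mul_pi, sin_pi_div_two, mul_one, mul_comm, ← mul_assoc, ← pow_add,
      Even.neg_one_pow ⟨k, rfl⟩, one_mul]
  rw [sum_neg_one_pow_mul_rieszWeight_mul_sin_eq hm, ← htop,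
    sum_neg_one_pow_mul_rieszWeight_mul_sin_eq le_rfl]
  field_simp

lemma rieszSum_cos_nat_mul {m : ℕ} (hm : m ≤ n) (t : ℝ) :
    rieszSum n (fun t => cos (m * t)) t =
      -(m / n * ∑ k ∈ range (2 * n), rieszWeight n k) * sin (m * t) := by
  calc rieszSum n (fun t => cos (m * t)) t
      = cos (m * t) * ∑ k ∈ range (2 * n), (-1) ^ k * rieszWeight n k * cos (m * rieszNode n k)
          - sin (m * t) *
            ∑ k ∈ range (2 * n), (-1) ^ k * rieszWeight n k * sin (m * rieszNode n k) := by
        simp only [rieszSum, mul_add, cos_add, mul_sum, ← sum_sub_distrib]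
        exact sum_congr rfl fun k _ => by ring
    _ = _ := by
        rw [sum_neg_one_pow_mul_rieszWeight_mul_cos, sum_neg_one_pow_mul_rieszWeight_mul_sin hm]
        ring

theorem rieszSum_eval_cos {P : ℝ[X]} (hP : P.degree ≤ n) (t : ℝ) :
    rieszSum n (fun t => P.eval (cos t)) t =
      -((∑ k ∈ range (2 * n), rieszWeight n k) / n) *
        (sin t * (derivative P).eval (cos t)) := by
  -- The difference of the two sides is a linear functional of `P`; it vanishes on the `T_m`,
  -- `m ≤ n`, which span `degreeLE ℝ n`.
  set c := (∑ k ∈ range (2 * n), rieszWeight n k) / n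
  let Λ : ℝ[X] →ₗ[ℝ] ℝ := ∑ k ∈ range (2 * n), ((-1) ^ k * rieszWeight n k) •
      leval (cos (t + rieszNode n k)) + (c * sin t) • (leval (cos t)).comp derivative
  have hΛ : ∀ Q : ℝ[X], Λ Q =
      rieszSum n (fun t => Q.eval (cos t)) t + c * (sin t * (derivative Q).eval (cos t)) := by
    intro Q
    simp [Λ, rieszSum, mul_assoc]
  have hT : ∀ m ≤ n, Λ (Chebyshev.T ℝ m) = 0 := by
    intro m hm
    have hU := Chebyshev.U_real_cos t (m - 1)
    rw [Int.cast_sub, Int.cast_natCast, Int.cast_one, sub_add_cancel] at hU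
    simp only [hΛ, Chebyshev.T_real_cos, Int.cast_natCast, rieszSum_cos_nat_mul hm,
      Chebyshev.T_derivative_eq_U, eval_mul, eval_natCast, c]
    rw [← hU]
    ring
  have hker : degreeLE ℝ n ≤ LinearMap.ker Λ := by
    rw [← (Chebyshev.chebyshevTsequence ℝ).span_degreeLE (by simp), Submodule.span_le]
    rintro _ ⟨m, hm, rfl⟩
    exact hT m hm
  have := hker (mem_degreeLE.mpr hP)
  rw [LinearMap.mem_ker, hΛ] at this
  linarith

lemma abs_sin_mul_derivative_eval_cos_le (hn : 0 < n) {P : ℝ[X]} (hP : P.degree ≤ n) (t : ℝ) :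
    |sin t * (derivative P).eval (cos t)| ≤
      ∑ k ∈ range (2 * n), n / (∑ j ∈ range (2 * n), rieszWeight n j) * rieszWeight n k *
        |P.eval (cos (t + rieszNode n k))| := by
  set C := ∑ j ∈ range (2 * n), rieszWeight n j with hCdef
  have hC : 0 < C := sum_pos (fun k hk => rieszWeight_pos (mem_range.mp hk)) (by simp; omega)
  have hn' : (0 : ℝ) < n := by exact_mod_cast hn
  calc |sin t * (derivative P).eval (cos t)|
      = n / C * |rieszSum n (fun t => P.eval (cos t)) t| := by
        rw [rieszSum_eval_cos hP, ← hCdef, abs_mul (-(C / n)), abs_neg, abs_div, abs_of_pos hC,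
          abs_of_pos hn']
        field_simp
    _ ≤ n / C * ∑ k ∈ range (2 * n),
          |(-1) ^ k * rieszWeight n k * P.eval (cos (t + rieszNode n k))| := by
        gcongr
        exact abs_sum_le_sum_abs _ _
    _ = _ := by
        rw [mul_sum]
        refine sum_congr rfl fun k _ => ?_
        rw [abs_mul, abs_mul, abs_pow, abs_neg, abs_one, one_pow, one_mul,
          abs_of_nonneg (rieszWeight_nonneg n k), mul_assoc]

end RieszInterpolation

lemma rpow_sum_mul_le_weight_mul_sum_mul_rpow {ι : Type*} (s : Finset ι) {p : ℝ}
    (hp : 1 ≤ p) {w a : ι → ℝ} (hw : ∀ i, 0 ≤ w i) (ha : ∀ i, 0 ≤ a i) :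
    (∑ i ∈ s, w i * a i) ^ p ≤ (∑ i ∈ s, w i) ^ (p - 1) * ∑ i ∈ s, w i * a i ^ p := by
  have hp0 : p ≠ 0 := by positivity
  have hW : 0 ≤ ∑ i ∈ s, w i := sum_nonneg fun i _ => hw i
  have hY : 0 ≤ ∑ i ∈ s, w i * a i ^ p :=
    sum_nonneg fun i _ => mul_nonneg (hw i) (rpow_nonneg (ha i) p)
  calc (∑ i ∈ s, w i * a i) ^ p
      ≤ ((∑ i ∈ s, w i) ^ (1 - p⁻¹) * (∑ i ∈ s, w i * a i ^ p) ^ p⁻¹) ^ p :=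
        rpow_le_rpow (sum_nonneg fun i _ => mul_nonneg (hw i) (ha i))
          (inner_le_weight_mul_Lp_of_nonneg s hp w a hw ha) (by positivity)
    _ = (∑ i ∈ s, w i) ^ (p - 1) * ∑ i ∈ s, w i * a i ^ p := by
        rw [mul_rpow (by positivity) (by positivity), ← rpow_mul hW, rpow_inv_rpow hY hp0,
          sub_mul, inv_mul_cancel₀ hp0, one_mul]

lemma Function.Even.intervalIntegral_neg_eq_two_mul {f : ℝ → ℝ} (hf : f.Even) {a : ℝ}
    (hint : IntervalIntegrable f volume (-a) a) :
    ∫ x in -a..a, f x = 2 * ∫ x in 0..a, f x := by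
  have hneg : ∫ x in -a..0, f x = ∫ x in 0..a, f x := by
    simpa [hf _] using (intervalIntegral.integral_comp_neg (a := 0) (b := a) f).symm
  have h0 : (0 : ℝ) ∈ Set.uIcc (-a) a := by
    rcases le_total 0 a with h | h <;> simp [h]
  rw [← intervalIntegral.integral_add_adjacent_intervals (b := 0)
    (hint.mono_set (Set.uIcc_subset_uIcc Set.left_mem_uIcc h0))
    (hint.mono_set (Set.uIcc_subset_uIcc h0 Set.right_mem_uIcc)), hneg, two_mul]

theorem Function.Periodic.integral_rpow_abs_le_of_abs_le_sum_translates {f g : ℝ → ℝ}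
    {T : ℝ} (hper : f.Periodic T) (hT : 0 ≤ T) (hf : Continuous f) (hg : Continuous g)
    {ι : Type*} (s : Finset ι) {w c : ι → ℝ} (hw : ∀ i, 0 ≤ w i) {p : ℝ} (hp : 1 ≤ p)
    (hbound : ∀ t, |g t| ≤ ∑ i ∈ s, w i * |f (t + c i)|) (a : ℝ) :
    ∫ t in a..a + T, |g t| ^ p ≤ (∑ i ∈ s, w i) ^ p * ∫ t in a..a + T, |f t| ^ p := by
  have hp0 : 0 ≤ p := by positivity
  have hcont : ∀ i, Continuous fun t => |f (t + c i)| ^ p := fun i =>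
    ((hf.comp (continuous_add_const (c i))).abs).rpow_const fun _ => Or.inr hp0
  have htranslate : ∀ i, ∫ t in a..a + T, |f (t + c i)| ^ p = ∫ t in a..a + T, |f t| ^ p := by
    intro i
    rw [intervalIntegral.integral_comp_add_right (fun t => |f t| ^ p), add_right_comm]
    exact (hper.comp fun x => |x| ^ p).intervalIntegral_add_eq _ _
  have hpointwise : ∀ t, |g t| ^ p ≤
      (∑ i ∈ s, w i) ^ (p - 1) * ∑ i ∈ s, w i * |f (t + c i)| ^ p := fun t =>
    (rpow_le_rpow (abs_nonneg _) (hbound t) hp0).trans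
      (rpow_sum_mul_le_weight_mul_sum_mul_rpow s hp hw fun _ => abs_nonneg _)
  calc ∫ t in a..a + T, |g t| ^ p
      ≤ ∫ t in a..a + T, (∑ i ∈ s, w i) ^ (p - 1) * ∑ i ∈ s, w i * |f (t + c i)| ^ p :=
        intervalIntegral.integral_mono_on (by linarith)
          ((hg.abs.rpow_const fun _ => Or.inr hp0).intervalIntegrable _ _)
          ((continuous_const.mul (continuous_finsetSum _ fun i _ =>
            continuous_const.mul (hcont i))).intervalIntegrable _ _)
          fun t _ => hpointwise t
    _ = (∑ i ∈ s, w i) ^ (p - 1) * ∑ i ∈ s, w i * ∫ t in a..a + T, |f t| ^ p := by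
        rw [intervalIntegral.integral_const_mul, intervalIntegral.integral_finsetSum
          fun i _ => ((hcont i).intervalIntegrable _ _).const_mul (w i)]
        simp only [intervalIntegral.integral_const_mul, htranslate]
    _ = (∑ i ∈ s, w i) ^ p * ∫ t in a..a + T, |f t| ^ p := by
        rw [← sum_mul, ← mul_assoc,
          ← rpow_add_one' (sum_nonneg fun i _ => hw i) (by linarith), sub_add_cancel]

theorem integral_rpow_abs_sin_mul_derivative_eval_cos_le {p : ℝ} (hp : 1 ≤ p) {n : ℕ}
    (hn : 0 < n) {P : ℝ[X]} (hP : P.degree ≤ n) :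
    ∫ t in 0..π, |sin t * (derivative P).eval (cos t)| ^ p ≤
      n ^ p * ∫ t in 0..π, |P.eval (cos t)| ^ p := by
  have hp0 : 0 ≤ p := by linarith
  set C := ∑ j ∈ range (2 * n), rieszWeight n j
  have hC : 0 < C := sum_pos (fun k hk => rieszWeight_pos (mem_range.mp hk)) (by simp; omega)
  have hweights : ∑ k ∈ range (2 * n), n / C * rieszWeight n k = n := by
    rw [← mul_sum]
    exact div_mul_cancel₀ _ hC.ne'
  have hcircle := Function.Periodic.integral_rpow_abs_le_of_abs_le_sum_translates
    (f := fun t => P.eval (cos t)) (fun t => by simp only [cos_add_two_pi]) two_pi_pos.le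
    (by fun_prop) (by fun_prop : Continuous fun t => sin t * (derivative P).eval (cos t))
    (range (2 * n))
    (fun k => mul_nonneg (div_nonneg n.cast_nonneg hC.le) (rieszWeight_nonneg n k)) hp
    (abs_sin_mul_derivative_eval_cos_le hn hP) (-π)
  beta_reduce at hcircle
  have hevenD : (fun t => |sin t * (derivative P).eval (cos t)| ^ p).Even := fun t => by
    simp only [sin_neg, cos_neg, neg_mul, abs_neg]
  have hevenF : (fun t => |P.eval (cos t)| ^ p).Even := fun t => by
    simp only [cos_neg]
  rw [hweights, show -π + 2 * π = π by ring, hevenD.intervalIntegral_neg_eq_two_mul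
    (Continuous.intervalIntegrable (by fun_prop) _ _), hevenF.intervalIntegral_neg_eq_two_mul
    (Continuous.intervalIntegrable (by fun_prop) _ _)] at hcircle
  linarith

lemma integral_Ioo_mul_inv_pi_mul_sqrt_one_sub_sq (g : ℝ → ℝ) :
    ∫ x in Ioo (-1 : ℝ) 1, g x * (π * √(1 - x ^ 2))⁻¹ =
      π⁻¹ * ∫ θ in 0..π, g (cos θ) := by
  rw [← Chebyshev.integral_measureT_eq_integral_cos, Chebyshev.integral_measureT,
    intervalIntegral.integral_of_le (by norm_num), ← integral_Ioc_eq_integral_Ioo,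
    ← integral_const_mul]
  congr 1
  ext x
  rw [mul_inv, sqrt_inv]
  ring

/-- The `L^p` Bernstein-type inequality of Nagy and Toókos on `[−1,1]`: for `1 ≤ p < ∞`
and every `ε > 0` there is `N` such that for all `n ≥ N` and all real polynomials `P`
of degree at most `n`,
`(∫_{−1}^1 |√(1−x²) P'(x)|^p (π√(1−x²))⁻¹ dx)^{1/p}
  ≤ (1+ε) n (∫_{−1}^1 |P(x)|^p (π√(1−x²))⁻¹ dx)^{1/p}`. -/
theorem lp_bernstein_nagy_tookos (p : ℝ) (hp : 1 ≤ p) :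
    ∀ ε > (0 : ℝ), ∃ N : ℕ, ∀ n ≥ N, ∀ P : Polynomial ℝ, P.degree ≤ n →
      (∫ x in Set.Ioo (-1 : ℝ) 1,
          |Real.sqrt (1 - x ^ 2) * (Polynomial.derivative P).eval x| ^ p *
            (Real.pi * Real.sqrt (1 - x ^ 2))⁻¹) ^ (1 / p) ≤
        (1 + ε) * (n : ℝ) *
          (∫ x in Set.Ioo (-1 : ℝ) 1,
              |P.eval x| ^ p * (Real.pi * Real.sqrt (1 - x ^ 2))⁻¹) ^ (1 / p) := by
  intro ε hε
  refine ⟨1, fun n hn P hP => ?_⟩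
  have hsqrt : EqOn (fun θ => |√(1 - cos θ ^ 2) * (derivative P).eval (cos θ)| ^ p)
      (fun θ => |sin θ * (derivative P).eval (cos θ)| ^ p) (uIcc 0 π) := fun θ hθ => by
    rw [uIcc_of_le pi_pos.le] at hθ
    simp only [← sin_eq_sqrt_one_sub_cos_sq hθ.1 hθ.2]
  rw [integral_Ioo_mul_inv_pi_mul_sqrt_one_sub_sq, integral_Ioo_mul_inv_pi_mul_sqrt_one_sub_sq
    (fun x => |P.eval x| ^ p), intervalIntegral.integral_congr hsqrt]
  have hbernstein := integral_rpow_abs_sin_mul_derivative_eval_cos_le hp hn hP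
  set A := ∫ θ in 0..π, |sin θ * (derivative P).eval (cos θ)| ^ p
  set B := ∫ θ in 0..π, |P.eval (cos θ)| ^ p
  have hA : 0 ≤ π⁻¹ * A := mul_nonneg (by positivity)
    (intervalIntegral.integral_nonneg pi_pos.le fun _ _ => by positivity)
  have hB : 0 ≤ π⁻¹ * B := mul_nonneg (by positivity)
    (intervalIntegral.integral_nonneg pi_pos.le fun _ _ => by positivity)
  have hn' : (0 : ℝ) ≤ n := n.cast_nonneg
  calc (π⁻¹ * A) ^ (1 / p)
      ≤ n * (π⁻¹ * B) ^ (1 / p) := by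
        rw [one_div, rpow_inv_le_iff_of_pos hA (by positivity) (by linarith),
          mul_rpow hn' (by positivity), rpow_inv_rpow hB (by linarith)]
        nlinarith [inv_pos.mpr pi_pos]
    _ ≤ (1 + ε) * n * (π⁻¹ * B) ^ (1 / p) := by
        gcongr
        exact le_mul_of_one_le_left hn' (by linarith)
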